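/- arXiv:math/0603587 — 4 statements merged into one kernel-verified Lean document; each statement's English description precedes it below -/
import Mathlib

section
/- Let R be a commutative ring of characteristic 0 (or containing ℚ), A = R[t], ∂ = d/dt and ∂_# = t·∂. Define the divided log-differential operators ∂_#^{[k]} := t^k ∂^{[k]} where ∂^{[k]} = ∂^k/k!. Then for all k, h ∈ ℕ, the composite ∂_#^{[k]} ∘ ∂_#^{[h]} equals ∑_{i=0}^{min(k,h)} c_i · ∂_#^{[k+h-i]} for suitable coefficients c_i ∈ ℤ, and in particular ∂_#^{[k]} ∘ ∂_#^{[h]} − ((k+h) choose k) ∂_#^{[k+h]} is a ℤ-linear combination of operators ∂_#^{[j]} with j < k + h. -/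
/-!
`∂_#^{[k]}` multiplies `t^n` by `n.choose k`, so `∂_#^{[k]} ∘ ∂_#^{[h]}` is diagonal in the
monomial basis with eigenvalue `n.choose k * n.choose h`. The theorem therefore reduces to
the identity
`n.choose k * n.choose h = ∑ i, (k + h - i).choose k * k.choose i * n.choose (k + h - i)`,
obtained by expanding `n.choose h` with Vandermonde's identity for `n = k + (n - k)` and
recombining `n.choose k * (n - k).choose (h - i) = n.choose (k + h - i) * (k + h - i).choose k`.
-/

open Polynomial

/-- The divided logarithmic differential operator `∂_#^{[k]} = t^k · ∂^k / k!`. -/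
noncomputable def dividedLogDiff (K : Type*) [Field K] [CharZero K] (k : ℕ)
    (p : Polynomial K) : Polynomial K :=
  (k.factorial : K)⁻¹ • (Polynomial.X ^ k * (⇑Polynomial.derivative)^[k] p)

open Finset

theorem Nat.choose_mul_choose_eq_sum (n k h : ℕ) :
    n.choose k * n.choose h =
      ∑ i ∈ range (min k h + 1), (k + h - i).choose k * k.choose i * n.choose (k + h - i) := by
  have vandermonde :
      n.choose k * n.choose h =
        n.choose k * ∑ i ∈ range (h + 1), k.choose i * (n - k).choose (h - i) := by
    rcases le_or_gt k n with hkn | hnk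
    · congr 1
      conv_lhs => rw [← Nat.add_sub_cancel' hkn]
      exact (Nat.add_choose_eq _ _ _).trans (Nat.sum_antidiagonal_eq_sum_range_succ_mk _ h)
    · rw [Nat.choose_eq_zero_of_lt hnk, zero_mul, zero_mul]
  have restrict :
      ∑ i ∈ range (h + 1), k.choose i * (n - k).choose (h - i) =
        ∑ i ∈ range (min k h + 1), k.choose i * (n - k).choose (h - i) := by
    refine (sum_subset (range_subset_range.mpr (by omega)) fun i hi hi' => ?_).symm
    simp only [mem_range] at hi hi'
    rw [Nat.choose_eq_zero_of_lt (by omega), zero_mul]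
  rw [vandermonde, restrict, mul_sum]
  refine sum_congr rfl fun i hi => ?_
  have hih : i ≤ h := by simp only [mem_range] at hi; omega
  have recombine := Nat.choose_mul (n := n) (k := k + h - i) (s := k) (by omega)
  rw [show k + h - i - k = h - i by omega] at recombine
  calc n.choose k * (k.choose i * (n - k).choose (h - i))
      = n.choose k * (n - k).choose (h - i) * k.choose i := by ring
    _ = (k + h - i).choose k * k.choose i * n.choose (k + h - i) := by
      rw [← recombine]; ring

theorem coeff_dividedLogDiff (K : Type*) [Field K] [CharZero K] (k n : ℕ) (p : K[X]) :
    (dividedLogDiff K k p).coeff n = (n.choose k : K) * p.coeff n := by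
  rw [dividedLogDiff, coeff_smul, coeff_X_pow_mul', smul_eq_mul]
  split_ifs with hkn
  · rw [coeff_iterate_derivative, Nat.sub_add_cancel hkn,
      Nat.descFactorial_eq_factorial_mul_choose, nsmul_eq_mul]
    have : (k.factorial : K) ≠ 0 := Nat.cast_ne_zero.mpr k.factorial_ne_zero
    push_cast
    field_simp
  · rw [Nat.choose_eq_zero_of_lt (by omega), Nat.cast_zero, mul_zero, zero_mul]

/-- **Composition of divided logarithmic differential operators.**
For `A = K[t]` over a field `K` of characteristic `0`, with
`∂_#^{[k]} := t^k ∂^{[k]}` and `∂^{[k]} = ∂^k/k!`, the composite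
`∂_#^{[k]} ∘ ∂_#^{[h]}` is an integral linear combination
`∑_{i=0}^{min(k,h)} c_i · ∂_#^{[k+h-i]}` whose leading coefficient is
`c_0 = (k+h).choose k`; in particular
`∂_#^{[k]} ∘ ∂_#^{[h]} − ((k+h).choose k) ∂_#^{[k+h]}` is a ℤ-linear combination of
the operators `∂_#^{[j]}` with `j < k + h`. -/
theorem dividedLogDiff_comp (K : Type*) [Field K] [CharZero K] (k h : ℕ) :
    ∃ c : ℕ → ℤ,
      (∀ p : Polynomial K,
        dividedLogDiff K k (dividedLogDiff K h p) =
          ∑ i ∈ Finset.range (min k h + 1), c i • dividedLogDiff K (k + h - i) p) ∧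
      c 0 = (k + h).choose k := by
  refine ⟨fun i => ((k + h - i).choose k * k.choose i : ℕ), fun p => ?_, by simp⟩
  ext n
  simp only [finsetSum_coeff, coeff_smul]
  simp only [coeff_dividedLogDiff, zsmul_eq_mul, Int.cast_natCast]
  rw [← mul_assoc, ← Nat.cast_mul, Nat.choose_mul_choose_eq_sum, Nat.cast_sum, sum_mul]
  exact sum_congr rfl fun i _ => by push_cast; ring
end

section
/- Let K be a field of characteristic 0, A = K[t₁,…,t_d], D^# the ring of logarithmic differential operators generated over A by θ_i = t_i∂_i for i ≤ s and ∂_i for i > s. Let A(Z) := (1/(t₁⋯t_s))·A ⊂ K[t,∏t_i^{−1}] with its natural D^#-module structure. Then the map D^# → A(Z), P ↦ P·(1/(t₁⋯t_s)), is surjective with kernel the left ideal generated by ᵗθ₁, …, ᵗθ_s, ∂_{s+1}, …, ∂_d, where ᵗθ_i = −∂_i t_i = −θ_i − 1; i.e. D^#/D^#·(θ₁+1, …, θ_s+1, ∂_{s+1}, …, ∂_d) ≅ A(Z) as left D^#-modules. -/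
open MvPolynomial

noncomputable section

variable (K : Type*) [Field K] (d : ℕ)

/-- The ring `K[t₁^{±1},…,t_d^{±1}]` of Laurent polynomials in `d` variables,
in which `A = K[t₁,…,t_d]` and all localizations `A[1/(t_{i₁}⋯t_{i_r})]` embed. -/
abbrev MvLaurent := AddMonoidAlgebra K (Fin d → ℤ)

/-- Multiplication by `t_i` on `K[t₁^{±1},…,t_d^{±1}]`. -/
def mvT (i : Fin d) : Module.End K (MvLaurent K d) :=
  LinearMap.mulLeft K (AddMonoidAlgebra.single (Pi.single i 1) (1 : K))

/-- The embedding `K[t₁,…,t_d] → K[t₁^{±1},…,t_d^{±1}]`. -/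
def mvEmbed : MvPolynomial (Fin d) K →ₐ[K] MvLaurent K d :=
  MvPolynomial.aeval fun i => AddMonoidAlgebra.single (Pi.single i 1) (1 : K)

/-- The exponent of the monomial `1/(t₁⋯t_s)`. -/
def poleExp (s : ℕ) : Fin d → ℤ := fun i => if (i : ℕ) < s then -1 else 0

end

/-!
Every logarithmic differential operator `P` can be brought to the normal form
`P = ∑ Qᵢ Eᵢ + r` with `r ∈ A` and `Eᵢ = θᵢ + 1` (`i < s`) or `∂ᵢ` (`i ≥ s`): pushing a generator
past a polynomial `q` costs only such terms, since `θᵢ q = q (θᵢ + 1) + (tᵢ∂ᵢq - q)` and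
`∂ᵢ q = q ∂ᵢ + ∂ᵢq`. Each `Eᵢ` kills `δ = 1/(t₁⋯t_s)`, so `P δ = r δ`, and `δ` is a unit of the
Laurent ring; hence `P δ = 0` forces `r = 0`.
-/

section NormalForm

variable {K A R ι : Type*} [CommSemiring K] [Semiring A] [Algebra K A] [Semiring R] [Algebra K R]
  [Fintype ι]

theorem exists_sum_mul_add_of_mem_adjoin (L : A →ₐ[K] R) (E : ι → R) {T : Set R}
    (hT : ∀ t ∈ T, ∀ a, ∃ Q : ι → R, (∀ i, Q i ∈ Algebra.adjoin K T) ∧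
      ∃ b, t * L a = ∑ i, Q i * E i + L b)
    {P : R} (hP : P ∈ Algebra.adjoin K T) (a : A) :
    ∃ Q : ι → R, (∀ i, Q i ∈ Algebra.adjoin K T) ∧ ∃ b, P * L a = ∑ i, Q i * E i + L b := by
  induction hP using Algebra.adjoin_induction generalizing a with
  | mem t ht => exact hT t ht a
  | algebraMap r =>
    refine ⟨0, fun _ => zero_mem _, algebraMap K A r * a, ?_⟩
    simp
  | add x y _ _ ihx ihy =>
    obtain ⟨Qx, hQx, bx, hx⟩ := ihx a
    obtain ⟨Qy, hQy, by', hy⟩ := ihy a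
    refine ⟨Qx + Qy, fun i => add_mem (hQx i) (hQy i), bx + by', ?_⟩
    simp only [add_mul, hx, hy, map_add, Pi.add_apply, Finset.sum_add_distrib]
    abel
  | mul x y hx _ ihx ihy =>
    obtain ⟨Qy, hQy, by', hy⟩ := ihy a
    obtain ⟨Qx, hQx, bx, hx'⟩ := ihx by'
    refine ⟨fun i => x * Qy i + Qx i, fun i => add_mem (mul_mem hx (hQy i)) (hQx i), bx, ?_⟩
    simp only [mul_assoc, hy, mul_add, hx', Finset.mul_sum, add_mul, Finset.sum_add_distrib]
    abel

end NormalForm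

theorem AddMonoidAlgebra.isUnit_single_one {k G : Type*} [CommSemiring k] [AddCommGroup G]
    (g : G) : IsUnit (AddMonoidAlgebra.single g (1 : k)) :=
  IsUnit.of_mul_eq_one (AddMonoidAlgebra.single (-g) 1) (by
    rw [AddMonoidAlgebra.single_mul_single, add_neg_cancel, one_mul, AddMonoidAlgebra.one_def])

noncomputable section

variable {K : Type*} [Field K] {d : ℕ}

open AddMonoidAlgebra

variable (K d) in
def polyMul : MvPolynomial (Fin d) K →ₐ[K] Module.End K (MvLaurent K d) :=
  (Algebra.lmul K (MvLaurent K d)).comp (mvEmbed K d)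

theorem polyMul_apply (p : MvPolynomial (Fin d) K) (x : MvLaurent K d) :
    polyMul K d p x = mvEmbed K d p * x :=
  rfl

theorem polyMul_X (j : Fin d) : polyMul K d (X j) = mvT K d j := by
  refine LinearMap.ext fun x => ?_
  rw [polyMul_apply, mvEmbed, aeval_X, mvT, LinearMap.mulLeft_apply]

theorem polyMul_mem_adjoin (T : Set (Module.End K (MvLaurent K d)))
    (p : MvPolynomial (Fin d) K) : polyMul K d p ∈ Algebra.adjoin K (Set.range (mvT K d) ∪ T) := by
  have h : polyMul K d p ∈ (Algebra.adjoin K (Set.range X)).map (polyMul K d) := by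
    rw [adjoin_range_X]
    exact ⟨p, trivial, rfl⟩
  rw [AlgHom.map_adjoin, ← Set.range_comp, show ⇑(polyMul K d) ∘ X = mvT K d from
    funext polyMul_X] at h
  exact Algebra.adjoin_mono Set.subset_union_left h

theorem polyMul_eq_zero_of_apply_single_eq_zero {p : MvPolynomial (Fin d) K} {m : Fin d → ℤ}
    (h : polyMul K d p (single m 1) = 0) : polyMul K d p = 0 := by
  rw [polyMul_apply, (isUnit_single_one m).mul_left_eq_zero] at h
  rw [polyMul, AlgHom.comp_apply, h, map_zero]

theorem mvT_single_one (j : Fin d) (m : Fin d → ℤ) :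
    mvT K d j (single m 1) = single (Pi.single j 1 + m) 1 := by
  rw [mvT, LinearMap.mulLeft_apply, single_mul_single, one_mul]

def logGen (s : ℕ) (dMv : Fin d → Module.End K (MvLaurent K d)) (i : Fin d) :
    Module.End K (MvLaurent K d) :=
  if (i : ℕ) < s then mvT K d i * dMv i else dMv i

def twistRel (s : ℕ) (dMv : Fin d → Module.End K (MvLaurent K d)) (i : Fin d) :
    Module.End K (MvLaurent K d) :=
  if (i : ℕ) < s then mvT K d i * dMv i + 1 else dMv i

section PartialDerivative

variable {s : ℕ} {dMv : Fin d → Module.End K (MvLaurent K d)}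
  (hdMv : ∀ (i : Fin d) (m : Fin d → ℤ),
    dMv i (single m (1 : K)) = (m i : K) • single (m - Pi.single i 1) (1 : K))
include hdMv

theorem dMv_single (j : Fin d) (m : Fin d → ℤ) (c : K) :
    dMv j (single m c) = (m j : K) • single (m - Pi.single j 1) c := by
  rw [← mul_one c, ← smul_eq_mul, ← smul_single, map_smul, hdMv, smul_comm, smul_single]

theorem dMv_mul (j : Fin d) (x y : MvLaurent K d) :
    dMv j (x * y) = dMv j x * y + x * dMv j y := by
  induction x using AddMonoidAlgebra.induction_linear with
  | zero => simp
  | add x x' hx hx' => simp only [add_mul, map_add, hx, hx']; abel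
  | single n a =>
    induction y using AddMonoidAlgebra.induction_linear with
    | zero => simp
    | add y y' hy hy' => simp only [mul_add, map_add, hy, hy']; abel
    | single m b =>
      simp only [single_mul_single, dMv_single hdMv, smul_mul_assoc, mul_smul_comm,
        Pi.add_apply, Int.cast_add, add_smul]
      rw [sub_add_eq_add_sub, add_sub_assoc']

theorem dMv_mvEmbed (j : Fin d) (p : MvPolynomial (Fin d) K) :
    dMv j (mvEmbed K d p) = mvEmbed K d (pderiv j p) := by
  induction p using MvPolynomial.induction_on with
  | C r => simp [mvEmbed, AddMonoidAlgebra.coe_algebraMap, dMv_single hdMv]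
  | add p q hp hq => simp only [map_add, hp, hq]
  | mul_X p k hp =>
    have hX : dMv j (mvEmbed K d (X k)) = mvEmbed K d (pderiv j (X k)) := by
      rw [show mvEmbed K d (X k) = single (Pi.single k 1) 1 from aeval_X _ _, hdMv]
      rcases eq_or_ne k j with rfl | hkj
      · rw [pderiv_X_self, map_one, AddMonoidAlgebra.one_def]
        simp
      · simp [hkj]
    rw [map_mul, dMv_mul hdMv, hp, hX, Derivation.leibniz, smul_eq_mul, smul_eq_mul, map_add,
      map_mul, map_mul]
    ring

theorem dMv_mul_polyMul (j : Fin d) (q : MvPolynomial (Fin d) K) :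
    dMv j * polyMul K d q = polyMul K d q * dMv j + polyMul K d (pderiv j q) := by
  refine LinearMap.ext fun x => ?_
  simp only [Module.End.mul_apply, LinearMap.add_apply, polyMul_apply, dMv_mul hdMv,
    dMv_mvEmbed hdMv]
  abel

theorem mvT_mul_dMv_mul_polyMul (j : Fin d) (q : MvPolynomial (Fin d) K) :
    mvT K d j * dMv j * polyMul K d q =
      polyMul K d q * (mvT K d j * dMv j + 1) + polyMul K d (X j * pderiv j q - q) := by
  rw [mul_assoc, dMv_mul_polyMul hdMv, ← polyMul_X, mul_add, ← mul_assoc, ← map_mul, ← map_mul,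
    mul_comm (X j) q, map_mul, map_sub, mul_assoc, mul_add, mul_one]
  abel

theorem twistRel_apply_pole (i : Fin d) : twistRel s dMv i (single (poleExp d s) 1) = 0 := by
  by_cases hi : (i : ℕ) < s
  · simp [twistRel, poleExp, hi, hdMv, mvT_single_one]
  · simp [twistRel, poleExp, hi, hdMv]

theorem exists_logGen_mul_polyMul (i : Fin d) (q : MvPolynomial (Fin d) K) :
    ∃ r, logGen s dMv i * polyMul K d q = polyMul K d q * twistRel s dMv i + polyMul K d r := by
  unfold logGen twistRel
  split_ifs
  · exact ⟨_, mvT_mul_dMv_mul_polyMul hdMv i q⟩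
  · exact ⟨_, dMv_mul_polyMul hdMv i q⟩

theorem exists_eq_sum_mul_twistRel_add_polyMul {P : Module.End K (MvLaurent K d)}
    (hP : P ∈ Algebra.adjoin K (Set.range (mvT K d) ∪ Set.range (logGen s dMv))) :
    ∃ Q : Fin d → Module.End K (MvLaurent K d),
      (∀ i, Q i ∈ Algebra.adjoin K (Set.range (mvT K d) ∪ Set.range (logGen s dMv))) ∧
      ∃ r, P = ∑ i, Q i * twistRel s dMv i + polyMul K d r := by
  have key := exists_sum_mul_add_of_mem_adjoin (polyMul K d) (twistRel s dMv) ?_ hP 1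
  · simpa only [map_one, mul_one] using key
  rintro t (⟨j, rfl⟩ | ⟨j, rfl⟩) q
  · exact ⟨0, fun _ => zero_mem _, X j * q, by simp [polyMul_X]⟩
  · obtain ⟨r, hr⟩ := exists_logGen_mul_polyMul hdMv j q
    refine ⟨Pi.single j (polyMul K d q), fun i => ?_, r, ?_⟩
    · rcases eq_or_ne i j with rfl | hij
      · simpa using polyMul_mem_adjoin _ q
      · simp [hij]
    · rw [hr, Fintype.sum_eq_single j fun i hij => by simp [hij], Pi.single_eq_same]

theorem sum_mul_twistRel_apply_pole (Q : Fin d → Module.End K (MvLaurent K d)) :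
    (∑ i, Q i * twistRel s dMv i) (single (poleExp d s) 1) = 0 := by
  simp [LinearMap.sum_apply, twistRel_apply_pole hdMv]

end PartialDerivative

end

theorem log_diffops_presentation_of_twist_general (K : Type*) [Field K]
    (d s : ℕ)
    (dMv : Fin d → Module.End K (MvLaurent K d))
    (hdMv : ∀ (i : Fin d) (m : Fin d → ℤ),
      dMv i (AddMonoidAlgebra.single m (1 : K)) =
        (m i : K) • AddMonoidAlgebra.single (m - Pi.single i 1) (1 : K)) :
    (∀ p : MvPolynomial (Fin d) K,
      ∃ P ∈ Algebra.adjoin K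
          (Set.range (mvT K d) ∪
            Set.range (fun i : Fin d =>
              if (i : ℕ) < s then mvT K d i * dMv i else dMv i)),
        P (AddMonoidAlgebra.single (poleExp d s) (1 : K)) =
          mvEmbed K d p * AddMonoidAlgebra.single (poleExp d s) (1 : K)) ∧
    (∀ P ∈ Algebra.adjoin K
        (Set.range (mvT K d) ∪
          Set.range (fun i : Fin d =>
            if (i : ℕ) < s then mvT K d i * dMv i else dMv i)),
      (P (AddMonoidAlgebra.single (poleExp d s) (1 : K)) = 0 ↔
        ∃ Q : Fin d → Module.End K (MvLaurent K d),
          (∀ i, Q i ∈ Algebra.adjoin K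
            (Set.range (mvT K d) ∪
              Set.range (fun i : Fin d =>
                if (i : ℕ) < s then mvT K d i * dMv i else dMv i))) ∧
          P = ∑ i : Fin d,
            Q i * (if (i : ℕ) < s then mvT K d i * dMv i + 1 else dMv i))) := by
  refine ⟨fun p => ⟨polyMul K d p, polyMul_mem_adjoin _ p, rfl⟩, fun P hP => ⟨fun hPδ => ?_, ?_⟩⟩
  · obtain ⟨Q, hQ, r, rfl⟩ := exists_eq_sum_mul_twistRel_add_polyMul (s := s) hdMv hP
    have hr : polyMul K d r = 0 := by
      refine polyMul_eq_zero_of_apply_single_eq_zero (m := poleExp d s) ?_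
      rwa [LinearMap.add_apply, sum_mul_twistRel_apply_pole hdMv, zero_add] at hPδ
    exact ⟨Q, hQ, by rw [hr, add_zero]; rfl⟩
  · rintro ⟨Q, -, rfl⟩
    exact sum_mul_twistRel_apply_pole hdMv Q

/-- **Presentation of `A(Z)` over the logarithmic differential operators.**
Let `K` be a field of characteristic `0`, `A = K[t₁,…,t_d]`, `s ≤ d`, and let `∂_i`
denote the partial derivatives (realized on the Laurent ring, characterized by their
values on monomials).  Let `D^#` be the ring of logarithmic differential operators
generated over `A` by `θ_i = t_i∂_i` for `i < s` and by `∂_i` for `i ≥ s`, and let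
`A(Z) = (1/(t₁⋯t_s))·A`.  Then the map `P ↦ P·(1/(t₁⋯t_s))` from `D^#`:
* is surjective onto `A(Z)`, and
* has kernel exactly the left ideal generated by `θ_1+1, …, θ_s+1, ∂_{s+1}, …, ∂_d`
  (where `−θ_i−1 = ᵗθ_i` is the transpose of `θ_i`);
i.e. `D^#/D^#·(θ₁+1,…,θ_s+1,∂_{s+1},…,∂_d) ≅ A(Z)` as left `D^#`-modules. -/
theorem log_diffops_presentation_of_twist (K : Type*) [Field K] [CharZero K]
    (d s : ℕ) (hs : s ≤ d)
    (dMv : Fin d → Module.End K (MvLaurent K d))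
    (hdMv : ∀ (i : Fin d) (m : Fin d → ℤ),
      dMv i (AddMonoidAlgebra.single m (1 : K)) =
        (m i : K) • AddMonoidAlgebra.single (m - Pi.single i 1) (1 : K)) :
    (∀ p : MvPolynomial (Fin d) K,
      ∃ P ∈ Algebra.adjoin K
          (Set.range (mvT K d) ∪
            Set.range (fun i : Fin d =>
              if (i : ℕ) < s then mvT K d i * dMv i else dMv i)),
        P (AddMonoidAlgebra.single (poleExp d s) (1 : K)) =
          mvEmbed K d p * AddMonoidAlgebra.single (poleExp d s) (1 : K)) ∧
    (∀ P ∈ Algebra.adjoin K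
        (Set.range (mvT K d) ∪
          Set.range (fun i : Fin d =>
            if (i : ℕ) < s then mvT K d i * dMv i else dMv i)),
      (P (AddMonoidAlgebra.single (poleExp d s) (1 : K)) = 0 ↔
        ∃ Q : Fin d → Module.End K (MvLaurent K d),
          (∀ i, Q i ∈ Algebra.adjoin K
            (Set.range (mvT K d) ∪
              Set.range (fun i : Fin d =>
                if (i : ℕ) < s then mvT K d i * dMv i else dMv i))) ∧
          P = ∑ i : Fin d,
            Q i * (if (i : ℕ) < s then mvT K d i * dMv i + 1 else dMv i))) :=
  log_diffops_presentation_of_twist_general K d s dMv hdMv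
end

section
/- Let K be a field of characteristic 0, A = K[t], D^# = K⟨t, θ⟩ with θ = t∂ and [θ, t] = t. For any left D^#-module E, there is a unique isomorphism of (D^#, D^#)-bimodules γ_E : D^# ⊗_A E → E ⊗_A D^# with γ_E(1 ⊗ e) = e ⊗ 1 for all e ∈ E, where D^# ⊗_A E uses the right A-structure of D^# and the tensor-product left action together with the diagonal right action, and E ⊗_A D^# uses the diagonal left action together with right multiplication. -/
/-!
The map is forced: `P ⊗ e = P • (1 ⊗ e)` must go to `P • (e ⊗ 1)`, and the inverse must send
`e ⊗ Q = (e ⊗ 1) • op Q` to `op Q • (1 ⊗ e)`. Each of these maps commutes with the action given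
by multiplication in `D^#` (left on `D^# ⊗ E`, right on `E ⊗ D^#`). Since `D^#` is free over `A`
on the powers of `θ`, it is generated as a ring by `A` and `θ`, so commuting with the diagonal
action (and commuting of the left and right actions on each side, which that check uses) only
has to be checked on `A` and `θ`, where it is the Leibniz formula.
-/

open TensorProduct MulOpposite

theorem Subring.closure_range_union_singleton_eq_top_of_basis {R D : Type*} [CommSemiring R]
    [Ring D] [Module R D] (j : R → D) (hj : ∀ (a : R) (x : D), a • x = j a * x) (t : D)
    (B : Module.Basis ℕ R D) (hB : ∀ k, B k = t ^ k) :
    Subring.closure (Set.range j ∪ {t}) = ⊤ := by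
  refine eq_top_iff.2 fun x _ => ?_
  rw [← B.linearCombination_repr x, Finsupp.linearCombination_apply, Finsupp.sum]
  refine Subring.sum_mem _ fun k _ => ?_
  rw [hj, hB]
  exact mul_mem (Subring.subset_closure (.inl ⟨_, rfl⟩))
    (pow_mem (Subring.subset_closure (.inr rfl)) k)

section Equivariance

variable {R M N : Type*} [Ring R] [AddCommGroup M] [AddCommGroup N] {s : Set R}

theorem AddMonoidHom.map_smul_of_closure_eq_top [Module R M] [Module R N]
    (hs : Subring.closure s = ⊤) (φ : M →+ N)
    (h : ∀ r ∈ s, ∀ z, φ (r • z) = r • φ z) (r : R) (z : M) : φ (r • z) = r • φ z := by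
  have hr : r ∈ Subring.closure s := hs ▸ Subring.mem_top r
  induction hr using Subring.closure_induction generalizing z with
  | mem r hr => exact h r hr z
  | zero => simp
  | one => simp
  | add r r' _ _ hr hr' => simp only [add_smul, map_add, hr, hr']
  | neg r _ hr => simp only [neg_smul, map_neg, hr]
  | mul r r' _ _ hr hr' => simp only [mul_smul, hr, hr']

theorem AddMonoidHom.map_op_smul_of_closure_eq_top [Module Rᵐᵒᵖ M] [Module Rᵐᵒᵖ N]
    (hs : Subring.closure s = ⊤) (φ : M →+ N)
    (h : ∀ r ∈ s, ∀ z, φ (MulOpposite.op r • z) = MulOpposite.op r • φ z) (r : R) (z : M) :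
    φ (MulOpposite.op r • z) = MulOpposite.op r • φ z := by
  have hs' : Subring.closure (MulOpposite.unop ⁻¹' s) = ⊤ := by
    rw [← Subring.op_closure, hs]
    rfl
  exact φ.map_smul_of_closure_eq_top hs' (fun r hr => h r.unop hr) (MulOpposite.op r) z

end Equivariance

theorem TensorProduct.addMonoidHom_ext {R M N P : Type*} [CommSemiring R] [AddCommMonoid M]
    [AddCommMonoid N] [AddCommMonoid P] [Module R M] [Module R N] {f g : M ⊗[R] N →+ P}
    (h : ∀ m n, f (m ⊗ₜ n) = g (m ⊗ₜ n)) : f = g := by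
  ext z
  induction z using TensorProduct.induction_on with
  | zero => simp
  | tmul m n => exact h m n
  | add z z' hz hz' => simp only [map_add, hz, hz']

theorem TensorProduct.map_smul_of_tmul {R S M N P : Type*} [CommSemiring R]
    [AddCommMonoid M] [AddCommMonoid N] [AddCommMonoid P] [Module R M] [Module R N]
    [DistribSMul S (M ⊗[R] N)] [DistribSMul S P] (φ : M ⊗[R] N →+ P) (r : S)
    (h : ∀ m n, φ (r • m ⊗ₜ n) = r • φ (m ⊗ₜ n)) (z : M ⊗[R] N) : φ (r • z) = r • φ z :=
  DFunLike.congr_fun (TensorProduct.addMonoidHom_ext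
    (f := φ.comp (DistribSMul.toAddMonoidHom _ r))
    (g := (DistribSMul.toAddMonoidHom _ r).comp φ) h) z

section Transposition

variable {R D D' E : Type*} [CommRing R] [Ring D] [AddCommGroup D'] [Module R D']
  [AddCommGroup E] [Module R E] {j : R → D} {t : D}

theorem smulCommClass_of_diagonal_left [Module R D] [SMul D E] [Module D (E ⊗[R] D)]
    [Module Dᵐᵒᵖ (E ⊗[R] D)] (hs : Subring.closure (Set.range j ∪ {t}) = ⊤)
    (hL'A : ∀ (a : R) (e : E) (x : D), j a • (e ⊗ₜ[R] x) = (a • e) ⊗ₜ[R] x)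
    (hL'θ : ∀ (e : E) (x : D), t • (e ⊗ₜ[R] x) = (t • e) ⊗ₜ[R] x + e ⊗ₜ[R] (t * x))
    (hR' : ∀ (P : D) (e : E) (x : D), op P • (e ⊗ₜ[R] x) = e ⊗ₜ[R] (x * P)) :
    SMulCommClass D Dᵐᵒᵖ (E ⊗[R] D) where
  smul_comm P Q z := by
    obtain ⟨Q, rfl⟩ := op_surjective Q
    refine ((DistribSMul.toAddMonoidHom _ (op Q)).map_smul_of_closure_eq_top hs ?_ P z).symm
    rintro _ (⟨a, rfl⟩ | rfl) <;> refine map_smul_of_tmul _ _ fun e x => ?_ <;>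
      simp only [DistribSMul.toAddMonoidHom_apply]
    · rw [hL'A, hR', hR', hL'A]
    · rw [hL'θ, smul_add, hR', hR', hR', hL'θ, mul_assoc]

theorem smulCommClass_of_diagonal_right [SMul D E] [Module D (D' ⊗[R] E)]
    [Module Dᵐᵒᵖ (D' ⊗[R] E)] (hs : Subring.closure (Set.range j ∪ {t}) = ⊤) {c : D ≃+ D'}
    (hL : ∀ (P x : D) (e : E), P • (c x ⊗ₜ[R] e) = c (P * x) ⊗ₜ[R] e)
    (hRA : ∀ (a : R) (x : D) (e : E), op (j a) • (c x ⊗ₜ[R] e) = c (x * j a) ⊗ₜ[R] e)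
    (hRθ : ∀ (x : D) (e : E), op t • (c x ⊗ₜ[R] e) = c (x * t) ⊗ₜ[R] e - c x ⊗ₜ[R] (t • e)) :
    SMulCommClass D Dᵐᵒᵖ (D' ⊗[R] E) where
  smul_comm P Q z := by
    obtain ⟨Q, rfl⟩ := op_surjective Q
    refine (DistribSMul.toAddMonoidHom _ P).map_op_smul_of_closure_eq_top hs ?_ Q z
    rintro _ (⟨a, rfl⟩ | rfl) <;> refine map_smul_of_tmul _ _ fun d e => ?_ <;>
      obtain ⟨x, rfl⟩ := c.surjective d <;> simp only [DistribSMul.toAddMonoidHom_apply]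
    · rw [hRA, hL, hL, hRA, mul_assoc]
    · rw [hRθ, smul_sub, hL, hL, hL, hRθ, mul_assoc]

theorem addMonoidHom_ext_of_map_smul_of_one_tmul [Module D (D' ⊗[R] E)] {c : D ≃+ D'}
    (hL : ∀ (P x : D) (e : E), P • (c x ⊗ₜ[R] e) = c (P * x) ⊗ₜ[R] e) {N : Type*}
    [AddCommMonoid N] [SMul D N] {γ γ' : D' ⊗[R] E →+ N}
    (hγ : ∀ (P : D) z, γ (P • z) = P • γ z) (hγ' : ∀ (P : D) z, γ' (P • z) = P • γ' z)
    (h : ∀ e, γ (c 1 ⊗ₜ e) = γ' (c 1 ⊗ₜ e)) :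
    γ = γ' := by
  refine addMonoidHom_ext fun d e => ?_
  obtain ⟨x, rfl⟩ := c.surjective d
  have hx : c x ⊗ₜ[R] e = x • (c 1 ⊗ₜ[R] e) := by rw [hL, mul_one]
  rw [hx, hγ, hγ', h]

variable [Module R D]

def transposition [Module D (E ⊗[R] D)] (c : D ≃+ D')
    (hc : ∀ (a : R) (x : D), a • c x = c (x * j a))
    (hL'A : ∀ (a : R) (e : E) (x : D), j a • (e ⊗ₜ[R] x) = (a • e) ⊗ₜ[R] x) :
    D' ⊗[R] E →+ E ⊗[R] D :=
  liftAddHom (((smulAddHom D (E ⊗[R] D)).compl₂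
      ((TensorProduct.mk R E D).flip 1).toAddMonoidHom).comp c.symm.toAddMonoidHom)
    fun a d e => by
      obtain ⟨x, rfl⟩ := c.surjective d
      show c.symm (a • c x) • (e ⊗ₜ[R] (1 : D)) = c.symm (c x) • ((a • e) ⊗ₜ[R] (1 : D))
      rw [hc, c.symm_apply_apply, c.symm_apply_apply, mul_smul, hL'A]

def transpositionInv [Module Dᵐᵒᵖ (D' ⊗[R] E)] (c : D ≃+ D')
    (hc : ∀ (a : R) (x : D), a • c x = c (x * j a))
    (hAD : ∀ (a : R) (x : D), a • x = j a * x)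
    (hRA : ∀ (a : R) (x : D) (e : E), op (j a) • (c x ⊗ₜ[R] e) = c (x * j a) ⊗ₜ[R] e) :
    E ⊗[R] D →+ D' ⊗[R] E :=
  liftAddHom (((smulAddHom Dᵐᵒᵖ (D' ⊗[R] E)).comp opAddEquiv.toAddMonoidHom).flip.comp
      (TensorProduct.mk R D' E (c 1)).toAddMonoidHom)
    fun a e x => by
      show op x • (c 1 ⊗ₜ[R] (a • e)) = op (a • x) • (c 1 ⊗ₜ[R] e)
      rw [hAD, op_mul, mul_smul, hRA, one_mul, ← smul_tmul, hc, one_mul]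

theorem transposition_tmul [Module D (E ⊗[R] D)] {c : D ≃+ D'}
    (hc : ∀ (a : R) (x : D), a • c x = c (x * j a))
    (hL'A : ∀ (a : R) (e : E) (x : D), j a • (e ⊗ₜ[R] x) = (a • e) ⊗ₜ[R] x) (x : D) (e : E) :
    transposition c hc hL'A (c x ⊗ₜ e) = x • (e ⊗ₜ[R] (1 : D)) := by
  show c.symm (c x) • (e ⊗ₜ[R] (1 : D)) = _
  rw [c.symm_apply_apply]

theorem transpositionInv_tmul [Module Dᵐᵒᵖ (D' ⊗[R] E)] {c : D ≃+ D'}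
    (hc : ∀ (a : R) (x : D), a • c x = c (x * j a)) (hAD : ∀ (a : R) (x : D), a • x = j a * x)
    (hRA : ∀ (a : R) (x : D) (e : E), op (j a) • (c x ⊗ₜ[R] e) = c (x * j a) ⊗ₜ[R] e)
    (e : E) (x : D) : transpositionInv c hc hAD hRA (e ⊗ₜ x) = op x • (c 1 ⊗ₜ[R] e) :=
  rfl

theorem transposition_smul [Module D (E ⊗[R] D)] [Module D (D' ⊗[R] E)] {c : D ≃+ D'}
    (hc : ∀ (a : R) (x : D), a • c x = c (x * j a))
    (hL'A : ∀ (a : R) (e : E) (x : D), j a • (e ⊗ₜ[R] x) = (a • e) ⊗ₜ[R] x)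
    (hL : ∀ (P x : D) (e : E), P • (c x ⊗ₜ[R] e) = c (P * x) ⊗ₜ[R] e) (P : D)
    (z : D' ⊗[R] E) : transposition c hc hL'A (P • z) = P • transposition c hc hL'A z := by
  refine map_smul_of_tmul _ _ (fun d e => ?_) z
  obtain ⟨x, rfl⟩ := c.surjective d
  rw [hL, transposition_tmul, transposition_tmul, mul_smul]

variable [SMul D E] [Module D (E ⊗[R] D)] [Module Dᵐᵒᵖ (D' ⊗[R] E)] {c : D ≃+ D'}
  (hs : Subring.closure (Set.range j ∪ {t}) = ⊤)
  (hc : ∀ (a : R) (x : D), a • c x = c (x * j a))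
  (hAD : ∀ (a : R) (x : D), a • x = j a * x)
  (hRA : ∀ (a : R) (x : D) (e : E), op (j a) • (c x ⊗ₜ[R] e) = c (x * j a) ⊗ₜ[R] e)
  (hRθ : ∀ (x : D) (e : E), op t • (c x ⊗ₜ[R] e) = c (x * t) ⊗ₜ[R] e - c x ⊗ₜ[R] (t • e))
  (hL'A : ∀ (a : R) (e : E) (x : D), j a • (e ⊗ₜ[R] x) = (a • e) ⊗ₜ[R] x)
  (hL'θ : ∀ (e : E) (x : D), t • (e ⊗ₜ[R] x) = (t • e) ⊗ₜ[R] x + e ⊗ₜ[R] (t * x))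

include hs hAD hRA hRθ hL'θ in
theorem transposition_op_smul [Module Dᵐᵒᵖ (E ⊗[R] D)] [SMulCommClass D Dᵐᵒᵖ (E ⊗[R] D)]
    (hR' : ∀ (P : D) (e : E) (x : D), op P • (e ⊗ₜ[R] x) = e ⊗ₜ[R] (x * P)) (P : D)
    (z : D' ⊗[R] E) :
    transposition c hc hL'A (op P • z) = op P • transposition c hc hL'A z := by
  refine (transposition c hc hL'A).map_op_smul_of_closure_eq_top hs ?_ P z
  rintro _ (⟨a, rfl⟩ | rfl) <;> refine map_smul_of_tmul _ _ fun d e => ?_ <;>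
    obtain ⟨x, rfl⟩ := c.surjective d
  · rw [hRA, transposition_tmul, transposition_tmul, mul_smul, hL'A, ← smul_comm x, hR',
      one_mul, smul_tmul, hAD, mul_one]
  · rw [hRθ, map_sub, transposition_tmul, transposition_tmul, transposition_tmul, mul_smul,
      hL'θ, mul_one, smul_add, add_sub_cancel_left, ← smul_comm x, hR', one_mul]

include hs hRθ hL'A hL'θ in
theorem transpositionInv_smul [Module D (D' ⊗[R] E)] [SMulCommClass D Dᵐᵒᵖ (D' ⊗[R] E)]
    (hL : ∀ (P x : D) (e : E), P • (c x ⊗ₜ[R] e) = c (P * x) ⊗ₜ[R] e) (P : D)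
    (z : E ⊗[R] D) :
    transpositionInv c hc hAD hRA (P • z) = P • transpositionInv c hc hAD hRA z := by
  refine (transpositionInv c hc hAD hRA).map_smul_of_closure_eq_top hs ?_ P z
  rintro _ (⟨a, rfl⟩ | rfl) <;> refine map_smul_of_tmul _ _ fun e x => ?_
  · rw [hL'A, transpositionInv_tmul, transpositionInv_tmul, ← smul_tmul, hc, one_mul,
      smul_comm, hL, mul_one]
  · rw [hL'θ, map_add, transpositionInv_tmul, transpositionInv_tmul, transpositionInv_tmul,
      op_mul, mul_smul, hRθ, one_mul, smul_sub, add_sub_cancel, smul_comm, hL, mul_one]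

include hs hRθ hL'θ in
theorem transpositionInv_comp_transposition [Module D (D' ⊗[R] E)]
    [SMulCommClass D Dᵐᵒᵖ (D' ⊗[R] E)]
    (hL : ∀ (P x : D) (e : E), P • (c x ⊗ₜ[R] e) = c (P * x) ⊗ₜ[R] e) :
    (transpositionInv c hc hAD hRA).comp (transposition c hc hL'A) = AddMonoidHom.id _ := by
  refine addMonoidHom_ext fun d e => ?_
  obtain ⟨x, rfl⟩ := c.surjective d
  rw [AddMonoidHom.comp_apply, transposition_tmul, transpositionInv_smul hs hc hAD hRA hRθ hL'A
    hL'θ hL, transpositionInv_tmul, op_one, one_smul, hL, mul_one, AddMonoidHom.id_apply]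

include hs hRθ hL'θ in
theorem transposition_comp_transpositionInv [Module Dᵐᵒᵖ (E ⊗[R] D)]
    [SMulCommClass D Dᵐᵒᵖ (E ⊗[R] D)]
    (hR' : ∀ (P : D) (e : E) (x : D), op P • (e ⊗ₜ[R] x) = e ⊗ₜ[R] (x * P)) :
    (transposition c hc hL'A).comp (transpositionInv c hc hAD hRA) = AddMonoidHom.id _ := by
  refine addMonoidHom_ext fun e x => ?_
  rw [AddMonoidHom.comp_apply, transpositionInv_tmul, transposition_op_smul hs hc hAD hRA hRθ
    hL'A hL'θ hR', transposition_tmul, one_smul, hR', one_mul, AddMonoidHom.id_apply]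

end Transposition

theorem transposition_isomorphism_gamma_general
    (K : Type*) [Field K]
    (Dsh : Type*) [Ring Dsh] [Algebra K Dsh]
    (jA : Polynomial K →ₐ[K] Dsh) (th : Dsh)
    [Module (Polynomial K) Dsh]
    (hAD : ∀ (a : Polynomial K) (x : Dsh), a • x = jA a * x)
    (B : Module.Basis ℕ (Polynomial K) Dsh) (hB : ∀ k : ℕ, B k = th ^ k)
    (E : Type*) [AddCommGroup E] [Module Dsh E] [Module (Polynomial K) E]
    (D' : Type*) [AddCommGroup D'] [Module (Polynomial K) D']
    (c : Dsh ≃+ D')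
    (hc : ∀ (a : Polynomial K) (x : Dsh), a • c x = c (x * jA a))
    [Module Dsh (D' ⊗[Polynomial K] E)]
    (hL : ∀ (P x : Dsh) (e : E),
      P • ((c x) ⊗ₜ[Polynomial K] e) = (c (P * x)) ⊗ₜ[Polynomial K] e)
    [Module Dshᵐᵒᵖ (D' ⊗[Polynomial K] E)]
    (hRA : ∀ (a : Polynomial K) (x : Dsh) (e : E),
      op (jA a) • ((c x) ⊗ₜ[Polynomial K] e) = (c (x * jA a)) ⊗ₜ[Polynomial K] e)
    (hRθ : ∀ (x : Dsh) (e : E),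
      op th • ((c x) ⊗ₜ[Polynomial K] e) =
        (c (x * th)) ⊗ₜ[Polynomial K] e - (c x) ⊗ₜ[Polynomial K] (th • e))
    [Module Dsh (E ⊗[Polynomial K] Dsh)]
    (hL'A : ∀ (a : Polynomial K) (e : E) (x : Dsh),
      jA a • (e ⊗ₜ[Polynomial K] x) = (a • e) ⊗ₜ[Polynomial K] x)
    (hL'θ : ∀ (e : E) (x : Dsh),
      th • (e ⊗ₜ[Polynomial K] x) =
        (th • e) ⊗ₜ[Polynomial K] x + e ⊗ₜ[Polynomial K] (th * x))
    [Module Dshᵐᵒᵖ (E ⊗[Polynomial K] Dsh)]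
    (hR' : ∀ (P : Dsh) (e : E) (x : Dsh),
      op P • (e ⊗ₜ[Polynomial K] x) = e ⊗ₜ[Polynomial K] (x * P)) :
    ∃! γ : (D' ⊗[Polynomial K] E) ≃+ (E ⊗[Polynomial K] Dsh),
      (∀ (P : Dsh) (z : D' ⊗[Polynomial K] E), γ (P • z) = P • γ z) ∧
      (∀ (P : Dsh) (z : D' ⊗[Polynomial K] E), γ (op P • z) = op P • γ z) ∧
      ∀ e : E, γ ((c 1) ⊗ₜ e) = e ⊗ₜ (1 : Dsh) := by
  have hs := Subring.closure_range_union_singleton_eq_top_of_basis jA hAD th B hB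
  have := smulCommClass_of_diagonal_left hs hL'A hL'θ hR'
  have := smulCommClass_of_diagonal_right hs hL hRA hRθ
  have hγL := transposition_smul hc hL'A hL
  have hγe : ∀ e : E, transposition c hc hL'A (c 1 ⊗ₜ e) = e ⊗ₜ (1 : Dsh) := fun e => by
    rw [transposition_tmul, one_smul]
  refine ⟨(transposition c hc hL'A).toAddEquiv (transpositionInv c hc hAD hRA)
      (transpositionInv_comp_transposition hs hc hAD hRA hRθ hL'A hL'θ hL)
      (transposition_comp_transpositionInv hs hc hAD hRA hRθ hL'A hL'θ hR'),
    ⟨hγL, transposition_op_smul hs hc hAD hRA hRθ hL'A hL'θ hR', hγe⟩, ?_⟩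
  rintro γ ⟨hγ'L, -, hγ'e⟩
  exact AddEquiv.toAddMonoidHom_injective
    (addMonoidHom_ext_of_map_smul_of_one_tmul hL hγ'L hγL fun e => (hγ'e e).trans (hγe e).symm)

/-- **The transposition isomorphism `γ_E : D^# ⊗_A E ≅ E ⊗_A D^#`.**
Let `K` be a field of characteristic `0`, `A = K[t]`, and `D^# = K⟨t, θ⟩` the ring of
logarithmic differential operators on `A` (`θ = t∂`, `[θ, jA a] = jA (t·a')`), free
over `A` with PBW basis `(θ^k)`.  Let `E` be a left `D^#`-module (with compatible
`A`-structure).  Realize `D^# ⊗_A E` (computed with the *right* `A`-structure of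
`D^#`, encoded by a copy `D'` of `D^#` with `a • c(x) = c(x·a)`) with the
tensor-product left `D^#`-action and the diagonal right `D^#`-action, and
`E ⊗_A D^#` with the diagonal left `D^#`-action and right multiplication.
Then there is a unique isomorphism of `(D^#, D^#)`-bimodules
`γ_E : D^# ⊗_A E ≅ E ⊗_A D^#` with `γ_E(1 ⊗ e) = e ⊗ 1` for all `e`. -/
theorem transposition_isomorphism_gamma
    (K : Type*) [Field K] [CharZero K]
    (Dsh : Type*) [Ring Dsh] [Algebra K Dsh]
    (jA : Polynomial K →ₐ[K] Dsh) (th : Dsh)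
    (hrel : ∀ a : Polynomial K,
      th * jA a - jA a * th = jA (Polynomial.X * Polynomial.derivative a))
    [Module (Polynomial K) Dsh]
    (hAD : ∀ (a : Polynomial K) (x : Dsh), a • x = jA a * x)
    (B : Module.Basis ℕ (Polynomial K) Dsh) (hB : ∀ k : ℕ, B k = th ^ k)
    (E : Type*) [AddCommGroup E] [Module Dsh E] [Module (Polynomial K) E]
    (hAE : ∀ (a : Polynomial K) (e : E), jA a • e = a • e)
    (D' : Type*) [AddCommGroup D'] [Module (Polynomial K) D']
    (c : Dsh ≃+ D')
    (hc : ∀ (a : Polynomial K) (x : Dsh), a • c x = c (x * jA a))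
    [Module Dsh (D' ⊗[Polynomial K] E)]
    (hL : ∀ (P x : Dsh) (e : E),
      P • ((c x) ⊗ₜ[Polynomial K] e) = (c (P * x)) ⊗ₜ[Polynomial K] e)
    [Module Dshᵐᵒᵖ (D' ⊗[Polynomial K] E)]
    (hRA : ∀ (a : Polynomial K) (x : Dsh) (e : E),
      op (jA a) • ((c x) ⊗ₜ[Polynomial K] e) = (c (x * jA a)) ⊗ₜ[Polynomial K] e)
    (hRθ : ∀ (x : Dsh) (e : E),
      op th • ((c x) ⊗ₜ[Polynomial K] e) =
        (c (x * th)) ⊗ₜ[Polynomial K] e - (c x) ⊗ₜ[Polynomial K] (th • e))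
    [Module Dsh (E ⊗[Polynomial K] Dsh)]
    (hL'A : ∀ (a : Polynomial K) (e : E) (x : Dsh),
      jA a • (e ⊗ₜ[Polynomial K] x) = (a • e) ⊗ₜ[Polynomial K] x)
    (hL'θ : ∀ (e : E) (x : Dsh),
      th • (e ⊗ₜ[Polynomial K] x) =
        (th • e) ⊗ₜ[Polynomial K] x + e ⊗ₜ[Polynomial K] (th * x))
    [Module Dshᵐᵒᵖ (E ⊗[Polynomial K] Dsh)]
    (hR' : ∀ (P : Dsh) (e : E) (x : Dsh),
      op P • (e ⊗ₜ[Polynomial K] x) = e ⊗ₜ[Polynomial K] (x * P)) :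
    ∃! γ : (D' ⊗[Polynomial K] E) ≃+ (E ⊗[Polynomial K] Dsh),
      (∀ (P : Dsh) (z : D' ⊗[Polynomial K] E), γ (P • z) = P • γ z) ∧
      (∀ (P : Dsh) (z : D' ⊗[Polynomial K] E), γ (op P • z) = op P • γ z) ∧
      ∀ e : E, γ ((c 1) ⊗ₜ e) = e ⊗ₜ (1 : Dsh) :=
  transposition_isomorphism_gamma_general K Dsh jA th hAD B hB E D' c hc hL hRA hRθ hL'A hL'θ hR'
end

section
/- Let K be a field of characteristic 0, A = K[t], D = K⟨t, ∂⟩ the Weyl algebra, D^# = K⟨t, t∂⟩ ⊂ D. Consider A as a left D^#-module via the natural action. Then the de Rham-type complex of the induced module: the two-term complex [D --·θ--> D] (right multiplication by θ = t∂, placed in degrees −1 and 0) computes D ⊗^L_{D^#} A, and its zeroth cohomology D/Dθ is isomorphic as a left D-module to the 'logarithmic induced module' u_+(A), while H^{−1} = 0, i.e. right multiplication by t∂ on the Weyl algebra D is injective. -/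
/-!
In the PBW basis `(∂ᵏ)` of `D` over `A = K[t]`, right multiplication by `θ = t∂` sends `∂ᵏ` to
`t ∂ᵏ⁺¹ + k ∂ᵏ`, so it raises the `∂`-degree by exactly one with leading coefficient `t`, a
non-zero-divisor of `A`; hence it is injective. For the universal property, `D/Dθ` is the cyclic
`D`-module on a generator killed by `θ`, and `a ↦ [a]` is a `D^#`-linear map `A → D/Dθ`: the only
nontrivial check is `θ a ≡ t a'` modulo `Dθ`, which is the Leibniz rule `∂ a = a ∂ + a'`.
-/

open Polynomial

theorem Module.Basis.injective_of_apply_eq_smul_succ_add {R M : Type*} [Ring R]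
    [AddCommGroup M] [Module R M] (B : Module.Basis ℕ R M) (φ : M →ₗ[R] M) {a : R}
    (ha : a ∈ nonZeroDivisorsRight R) (c : ℕ → R)
    (hφ : ∀ k, φ (B k) = a • B (k + 1) + c k • B k) : Function.Injective φ := by
  classical
  refine (injective_iff_map_eq_zero φ).2 fun x hx => ?_
  by_contra hne
  have hsupp : (B.repr x).support.Nonempty := by simpa using hne
  set n := (B.repr x).support.max' hsupp
  have hcoeff : B.repr (φ x) (n + 1) = B.repr x n * a := by
    conv_lhs => rw [← B.linearCombination_repr x, Finsupp.linearCombination_apply,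
      Finsupp.sum, map_sum, map_sum, Finsupp.finsetSum_apply]
    rw [Finset.sum_eq_single n]
    · simp [hφ]
    · intro k hk hkn
      have : k ≤ n := (B.repr x).support.le_max' k hk
      simp only [map_smul, hφ, map_add, Basis.repr_self, Finsupp.smul_apply, Finsupp.add_apply,
        Finsupp.single_apply, if_neg (show k + 1 ≠ n + 1 by omega),
        if_neg (show k ≠ n + 1 by omega), add_zero, smul_zero]
    · intro h; exact absurd ((B.repr x).support.max'_mem hsupp) h
  rw [hx, map_zero, Finsupp.zero_apply] at hcoeff
  exact Finsupp.mem_support_iff.1 ((B.repr x).support.max'_mem hsupp) (ha _ hcoeff.symm)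

theorem pow_mul_mul_of_mul_eq_mul_add_one {R : Type*} [Ring R] {d t : R}
    (h : d * t = t * d + 1) (k : ℕ) : d ^ k * (t * d) = t * d ^ (k + 1) + k • d ^ k := by
  induction k with
  | zero => simp
  | succ k ih =>
    calc d ^ (k + 1) * (t * d) = d * (d ^ k * (t * d)) := by rw [pow_succ', mul_assoc]
      _ = (d * t) * d ^ (k + 1) + k • d ^ (k + 1) := by
        rw [ih, mul_add, mul_smul_comm, ← pow_succ', mul_assoc]
      _ = t * d ^ (k + 1 + 1) + (k + 1) • d ^ (k + 1) := by
        rw [h, add_mul, one_mul, mul_assoc, ← pow_succ', succ_nsmul]; abel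

theorem Submodule.existsUnique_liftQ_span_singleton {R N : Type*} [Ring R] [AddCommGroup N]
    [Module R N] {θ : R} {m : N} (h : θ • m = 0) :
    ∃! g : (R ⧸ span R {θ}) →ₗ[R] N, ∀ P : R, g (Quotient.mk P) = P • m :=
  ⟨liftQSpanSingleton θ (LinearMap.toSpanSingleton R N m) h, fun _ => rfl,
    fun _ hg => linearMap_qext _ (LinearMap.ext hg)⟩

section WeylAlgebra

variable {K D : Type*} [CommRing K] [Ring D] [Algebra K D] {jA : K[X] →ₐ[K] D} {der : D}

theorem der_mul_jA_X (hrel : ∀ a : K[X], der * jA a - jA a * der = jA (derivative a)) :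
    der * jA X = jA X * der + 1 := by
  simpa [sub_eq_iff_eq_add'] using hrel X

theorem mul_jA_X_mul_der_injective
    (hrel : ∀ a : K[X], der * jA a - jA a * der = jA (derivative a))
    [Module K[X] D] (hsmul : ∀ (a : K[X]) (x : D), a • x = jA a * x)
    (B : Module.Basis ℕ K[X] D) (hB : ∀ k : ℕ, B k = der ^ k) :
    Function.Injective (· * (jA X * der)) := by
  let φ : D →ₗ[K[X]] D :=
    { toFun := (· * (jA X * der))
      map_add' := fun x y => add_mul x y _
      map_smul' := fun a x => by simp only [hsmul, mul_assoc, RingHom.id_apply] }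
  refine B.injective_of_apply_eq_smul_succ_add φ X_mem_nonzeroDivisors.2 (fun k => k) fun k => ?_
  change B k * (jA X * der) = _
  rw [hB, hB, hsmul, hsmul, map_natCast, ← nsmul_eq_mul,
    pow_mul_mul_of_mul_eq_mul_add_one (der_mul_jA_X hrel)]

theorem jA_mem_adjoin (a : K[X]) : jA a ∈ Algebra.adjoin K {jA X, jA X * der} := by
  rw [← aeval_X_left_apply a, ← aeval_algHom_apply]
  exact Algebra.adjoin_mono (Set.singleton_subset_iff.2 (Set.mem_insert _ _))
    (aeval_mem_adjoin_singleton K _)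

variable (act : D →ₐ[K] Module.End K K[X])
  (hactA : ∀ a : K[X], act (jA a) = LinearMap.mulLeft K a)
  (hactd : act der = (derivative : Module.End K K[X]))
include hactA hactd

theorem act_jA_X_mul_der_apply (a : K[X]) : act (jA X * der) a = X * derivative a := by
  rw [map_mul, Module.End.mul_apply, hactA, hactd, LinearMap.mulLeft_apply]

theorem mk_jA_act_eq_smul (hrel : ∀ a : K[X], der * jA a - jA a * der = jA (derivative a))
    {Q : D} (hQ : Q ∈ Algebra.adjoin K {jA X, jA X * der}) (a : K[X]) :
    (Submodule.Quotient.mk (jA (act Q a)) : D ⧸ Submodule.span D {jA X * der}) =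
      Q • Submodule.Quotient.mk (jA a) := by
  induction hQ using Algebra.adjoin_induction generalizing a with
  | mem x hx =>
    rcases hx with rfl | rfl
    · rw [hactA, LinearMap.mulLeft_apply, map_mul, ← Submodule.Quotient.mk_smul, smul_eq_mul]
    · rw [act_jA_X_mul_der_apply act hactA hactd, ← Submodule.Quotient.mk_smul, smul_eq_mul,
        Submodule.Quotient.eq]
      have hder : der * jA a = jA a * der + jA (derivative a) := by
        rw [← sub_eq_iff_eq_add', hrel]
      have hcomm : jA X * jA a = jA a * jA X := by rw [← map_mul, ← map_mul, mul_comm]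
      have hdiff : jA (X * derivative a) - jA X * der * jA a = -jA a • (jA X * der) := by
        rw [mul_assoc, hder, mul_add, map_mul, ← mul_assoc, hcomm, smul_eq_mul, neg_mul,
          mul_assoc]
        abel
      rw [hdiff]
      exact Submodule.smul_mem _ _ (Submodule.mem_span_singleton_self _)
  | algebraMap r =>
    rw [AlgHom.commutes, algebraMap_smul, Module.algebraMap_end_apply, map_smul,
      Submodule.Quotient.mk_smul]
  | add x y _ _ hx hy =>
    rw [map_add, LinearMap.add_apply, map_add, Submodule.Quotient.mk_add, hx, hy, add_smul]
  | mul x y _ _ hx hy => rw [map_mul, Module.End.mul_apply, hx, hy, mul_smul]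

theorem existsUnique_addMonoidHom_of_linearMap
    (hrel : ∀ a : K[X], der * jA a - jA a * der = jA (derivative a))
    {N : Type*} [AddCommGroup N] [Module D N]
    (g : (D ⧸ Submodule.span D {jA X * der}) →ₗ[D] N) :
    ∃! f : K[X] →+ N,
      (∀ Q ∈ Algebra.adjoin K {jA X, jA X * der}, ∀ a : K[X], f (act Q a) = Q • f a) ∧
      ∀ P : D, g (Submodule.Quotient.mk P) = P • f 1 := by
  refine ⟨AddMonoidHom.mk' (fun a => g (Submodule.Quotient.mk (jA a))) fun a b => by
      rw [map_add, Submodule.Quotient.mk_add, map_add],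
    ⟨fun Q hQ a => ?_, fun P => ?_⟩, fun f ⟨hf, hg⟩ => AddMonoidHom.ext fun a => ?_⟩
  · change g (Submodule.Quotient.mk (jA (act Q a))) = Q • g (Submodule.Quotient.mk (jA a))
    rw [mk_jA_act_eq_smul act hactA hactd hrel hQ, map_smul]
  · change _ = P • g (Submodule.Quotient.mk (jA 1))
    rw [map_one, ← map_smul, ← Submodule.Quotient.mk_smul, smul_eq_mul, mul_one]
  · calc f a = f (act (jA a) 1) := by rw [hactA, LinearMap.mulLeft_apply, mul_one]
      _ = jA a • g (Submodule.Quotient.mk 1) := by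
        rw [hf _ (jA_mem_adjoin a), hg, one_smul]
      _ = g (Submodule.Quotient.mk (jA a)) := by
        rw [← map_smul, ← Submodule.Quotient.mk_smul, smul_eq_mul, mul_one]

end WeylAlgebra

theorem induced_module_concentrated_general (K : Type*) [Field K]
    (D : Type*) [Ring D] [Algebra K D]
    (jA : Polynomial K →ₐ[K] D) (der : D)
    (hrel : ∀ a : Polynomial K, der * jA a - jA a * der = jA (Polynomial.derivative a))
    [Module (Polynomial K) D] (hsmul : ∀ (a : Polynomial K) (x : D), a • x = jA a * x)
    (B : Module.Basis ℕ (Polynomial K) D) (hB : ∀ k : ℕ, B k = der ^ k)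
    (act : D →ₐ[K] Module.End K (Polynomial K))
    (hactA : ∀ a : Polynomial K, act (jA a) = LinearMap.mulLeft K a)
    (hactd : act der = (Polynomial.derivative : Module.End K (Polynomial K))) :
    (∀ P : D, P * (jA Polynomial.X * der) = 0 → P = 0) ∧
    (∀ (N : Type*) [AddCommGroup N] [Module D N],
      (∀ f : Polynomial K →+ N,
        (∀ Q ∈ Algebra.adjoin K ({jA Polynomial.X, jA Polynomial.X * der} : Set D),
          ∀ a : Polynomial K, f (act Q a) = Q • f a) →
        ∃! g : (D ⧸ Submodule.span D ({jA Polynomial.X * der} : Set D)) →ₗ[D] N,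
          ∀ P : D, g (Submodule.Quotient.mk P) = P • f 1) ∧
      (∀ g : (D ⧸ Submodule.span D ({jA Polynomial.X * der} : Set D)) →ₗ[D] N,
        ∃! f : Polynomial K →+ N,
          (∀ Q ∈ Algebra.adjoin K ({jA Polynomial.X, jA Polynomial.X * der} : Set D),
            ∀ a : Polynomial K, f (act Q a) = Q • f a) ∧
          ∀ P : D, g (Submodule.Quotient.mk P) = P • f 1)) := by
  refine ⟨fun P hP => mul_jA_X_mul_der_injective hrel hsmul B hB (hP.trans (zero_mul _).symm),
    fun N _ _ => ⟨fun f hf => Submodule.existsUnique_liftQ_span_singleton ?_,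
      existsUnique_addMonoidHom_of_linearMap act hactA hactd hrel⟩⟩
  have hθ := hf _ (Algebra.subset_adjoin (Set.mem_insert_of_mem _ rfl)) 1
  rwa [act_jA_X_mul_der_apply act hactA hactd, derivative_one, mul_zero, map_zero, eq_comm] at hθ

/-- **The induced module `u₊(O) = D ⊗_{D^#} K[t]` is `D/D·(t∂)`, concentrated in
degree `0`.**
Let `K` be a field of characteristic `0`, `A = K[t]`, and let `D = K⟨t, ∂⟩` be the
Weyl algebra: a `K`-algebra with a map `jA : A → D`, an element `∂ = der` with
`[∂, jA a] = jA a'`, free as a left `A`-module with PBW basis `(∂^k)`, acting on `A`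
through `act` (with `jA a` acting by multiplication and `der` by `d/dt`).  Let
`D^# = K⟨t, t∂⟩ ⊆ D` and `θ = t∂`.  Then the two-term complex `[D --·θ--> D]`
computes `D ⊗^L_{D^#} A`:
* `H^{-1} = 0`: right multiplication by `θ = t∂` on `D` is injective;
* `H^0 = D/D·θ` is the induced module `u₊(A) = D ⊗_{D^#} A`: for every left
  `D`-module `N`, `D`-linear maps `D/D·θ → N` correspond bijectively to
  `D^#`-linear maps `A → N` (universal property of the scalar extension). -/
theorem induced_module_concentrated (K : Type*) [Field K] [CharZero K]
    (D : Type*) [Ring D] [Algebra K D]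
    (jA : Polynomial K →ₐ[K] D) (der : D)
    (hrel : ∀ a : Polynomial K, der * jA a - jA a * der = jA (Polynomial.derivative a))
    [Module (Polynomial K) D] (hsmul : ∀ (a : Polynomial K) (x : D), a • x = jA a * x)
    (B : Module.Basis ℕ (Polynomial K) D) (hB : ∀ k : ℕ, B k = der ^ k)
    (act : D →ₐ[K] Module.End K (Polynomial K))
    (hactA : ∀ a : Polynomial K, act (jA a) = LinearMap.mulLeft K a)
    (hactd : act der = (Polynomial.derivative : Module.End K (Polynomial K))) :
    (∀ P : D, P * (jA Polynomial.X * der) = 0 → P = 0) ∧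
    (∀ (N : Type*) [AddCommGroup N] [Module D N],
      (∀ f : Polynomial K →+ N,
        (∀ Q ∈ Algebra.adjoin K ({jA Polynomial.X, jA Polynomial.X * der} : Set D),
          ∀ a : Polynomial K, f (act Q a) = Q • f a) →
        ∃! g : (D ⧸ Submodule.span D ({jA Polynomial.X * der} : Set D)) →ₗ[D] N,
          ∀ P : D, g (Submodule.Quotient.mk P) = P • f 1) ∧
      (∀ g : (D ⧸ Submodule.span D ({jA Polynomial.X * der} : Set D)) →ₗ[D] N,
        ∃! f : Polynomial K →+ N,
          (∀ Q ∈ Algebra.adjoin K ({jA Polynomial.X, jA Polynomial.X * der} : Set D),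
            ∀ a : Polynomial K, f (act Q a) = Q • f a) ∧
          ∀ P : D, g (Submodule.Quotient.mk P) = P • f 1)) :=
  induced_module_concentrated_general K D jA der hrel hsmul B hB act hactA hactd
end
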